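/- Let X be a random vector in ℝ^d with characteristic function φ(k) = E[exp(i k·X)] satisfying (1 − φ(k)) / (L(|k|) |k|^α) → 1 as |k| → 0, where α > 2 and L : (0,∞) → (0,∞) is slowly varying at zero. Then X = 0 almost surely. -/

import Mathlib

open MeasureTheory ProbabilityTheory Filter Real Topology

noncomputable section

/-- Characteristic function with the convention `φ(k) = E[exp(i k·X)]`. -/
def charFn' {d : ℕ} {Ω : Type*} [MeasureSpace Ω]
    (X : Ω → EuclideanSpace ℝ (Fin d)) (k : EuclideanSpace ℝ (Fin d)) : ℂ :=
  ∫ ω, Complex.exp (Complex.I * ((inner ℝ k (X ω) : ℝ) : ℂ))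

/-- `L` is slowly varying at zero: for all `a > 0`, `L(at)/L(t) → 1` as `t → 0⁺`. -/
def SlowlyVaryingAtZero (L : ℝ → ℝ) : Prop :=
  ∀ a : ℝ, 0 < a → Filter.Tendsto (fun t => L (a * t) / L t) (𝓝[>] (0 : ℝ)) (𝓝 1)

/-!
Test `φ` along `k = t v` for a unit vector `v`: `1 - Re φ(t v) = E[1 - cos (t ⟪v, X⟫)]`, which by
hypothesis is of order `L(t) t^α`. Slow variation does not stop `L` from oscillating, but it keeps
`L(t) t^(α-2) → 0` along a geometric sequence `t → 0`, so along it
`E[(1 - cos (t ⟪v, X⟫)) / t²] → 0`. The integrand tends pointwise to `⟪v, X⟫² / 2`, and Fatou's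
lemma gives `E[⟪v, X⟫²] = 0`.
-/

/-- Along `tₙ = 2⁻ⁿ` the ratio of consecutive terms of `L(tₙ) tₙ^δ` tends to `2^(-δ) < 1`. -/
theorem SlowlyVaryingAtZero.exists_tendsto_mul_rpow {L : ℝ → ℝ}
    (hLpos : ∀ t : ℝ, 0 < t → 0 < L t) (hL : SlowlyVaryingAtZero L) {δ : ℝ} (hδ : 0 < δ) :
    ∃ t : ℕ → ℝ, Tendsto t atTop (𝓝[>] 0) ∧ Tendsto (fun n => L (t n) * t n ^ δ) atTop (𝓝 0) := by
  set t : ℕ → ℝ := fun n => 2⁻¹ ^ n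
  have htpos (n : ℕ) : 0 < t n := by positivity
  have ht : Tendsto t atTop (𝓝[>] 0) :=
    tendsto_nhdsWithin_iff.2 ⟨tendsto_pow_atTop_nhds_zero_of_lt_one (by norm_num) (by norm_num),
      .of_forall htpos⟩
  refine ⟨t, ht, Summable.tendsto_atTop_zero (summable_of_ratio_test_tendsto_lt_one
    (Real.rpow_lt_one (x := 2⁻¹) (by norm_num) (by norm_num) hδ) (.of_forall fun n => ?_) ?_)⟩
  · exact (mul_pos (hLpos _ (htpos n)) (rpow_pos_of_pos (htpos n) δ)).ne'
  · have hratio := ((hL 2⁻¹ (by norm_num)).comp ht).mul_const ((2⁻¹ : ℝ) ^ δ)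
    rw [one_mul] at hratio
    refine hratio.congr fun n => ?_
    have htn := htpos n
    have hLn := hLpos _ htn
    have hLn' := hLpos (2⁻¹ * t n) (by positivity)
    have hsucc : t (n + 1) = 2⁻¹ * t n := pow_succ' _ _
    simp only [Function.comp_apply, hsucc, Real.norm_eq_abs]
    rw [abs_of_pos (by positivity), abs_of_pos (by positivity), mul_rpow (by norm_num) htn.le]
    field_simp

theorem Real.tendsto_one_sub_cos_mul_div_sq (y : ℝ) :
    Tendsto (fun t => (1 - cos (t * y)) / t ^ 2) (𝓝[≠] 0) (𝓝 (y ^ 2 / 2)) := by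
  have hsinc : Tendsto (fun t => y ^ 2 / 2 * sinc (t * y / 2) ^ 2) (𝓝 0) (𝓝 (y ^ 2 / 2)) := by
    simpa using (continuous_sinc.comp (by fun_prop : Continuous fun t : ℝ => t * y / 2)).tendsto 0
      |>.pow 2 |>.const_mul (y ^ 2 / 2)
  refine (hsinc.mono_left nhdsWithin_le_nhds).congr' ?_
  filter_upwards [self_mem_nhdsWithin] with t ht
  rcases eq_or_ne y 0 with rfl | hy
  · simp
  have ht : t ≠ 0 := ht
  rw [sinc_of_ne_zero (by positivity), show t * y = 2 * (t * y / 2) by ring, cos_two_mul_eq_one_sub]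
  field_simp
  ring

theorem ae_eq_zero_of_tendsto_integral_one_sub_cos_div_sq {Ω : Type*} [MeasurableSpace Ω]
    {μ : Measure Ω} [IsFiniteMeasure μ] {Y : Ω → ℝ} (hY : Measurable Y) {t : ℕ → ℝ}
    (ht : Tendsto t atTop (𝓝[≠] 0))
    (h : Tendsto (fun n => (∫ ω, (1 - cos (t n * Y ω)) ∂μ) / t n ^ 2) atTop (𝓝 0)) :
    ∀ᵐ ω ∂μ, Y ω = 0 := by
  set f : ℕ → Ω → ENNReal := fun n ω => ENNReal.ofReal ((1 - cos (t n * Y ω)) / t n ^ 2)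
  have hf_meas (n : ℕ) : Measurable (f n) := by fun_prop
  have hf_lim (ω : Ω) : Tendsto (fun n => f n ω) atTop (𝓝 (ENNReal.ofReal (Y ω ^ 2 / 2))) :=
    (ENNReal.continuous_ofReal.tendsto _).comp ((tendsto_one_sub_cos_mul_div_sq (Y ω)).comp ht)
  have hf_int (n : ℕ) :
      ∫⁻ ω, f n ω ∂μ = ENNReal.ofReal ((∫ ω, (1 - cos (t n * Y ω)) ∂μ) / t n ^ 2) := by
    rw [← integral_div, ofReal_integral_eq_lintegral_ofReal]
    · refine (Integrable.of_bound (by fun_prop) 2 (.of_forall fun ω => ?_)).div_const _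
      rw [norm_eq_abs, abs_le]
      constructor <;> linarith [neg_one_le_cos (t n * Y ω), cos_le_one (t n * Y ω)]
    · exact .of_forall fun ω => div_nonneg (sub_nonneg.2 (cos_le_one _)) (sq_nonneg _)
  have hfatou : ∫⁻ ω, ENNReal.ofReal (Y ω ^ 2 / 2) ∂μ = 0 := by
    refine le_antisymm ?_ zero_le
    calc ∫⁻ ω, ENNReal.ofReal (Y ω ^ 2 / 2) ∂μ = ∫⁻ ω, liminf (fun n => f n ω) atTop ∂μ := by
          simp only [fun ω => (hf_lim ω).liminf_eq]
      _ ≤ liminf (fun n => ∫⁻ ω, f n ω ∂μ) atTop := lintegral_liminf_le hf_meas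
      _ = 0 := by
          simp only [hf_int]
          simpa [Function.comp_def] using ((ENNReal.continuous_ofReal.tendsto _).comp h).liminf_eq
  filter_upwards [(lintegral_eq_zero_iff (by fun_prop)).1 hfatou] with ω hω
  rw [Pi.zero_apply, ENNReal.ofReal_eq_zero] at hω
  exact pow_eq_zero_iff two_ne_zero |>.1 (by linarith [sq_nonneg (Y ω)])

theorem one_sub_re_charFn' {d : ℕ} {Ω : Type*} [MeasureSpace Ω]
    [IsProbabilityMeasure (ℙ : Measure Ω)]
    {X : Ω → EuclideanSpace ℝ (Fin d)} (hX : Measurable X) (k : EuclideanSpace ℝ (Fin d)) :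
    1 - (charFn' X k).re = ∫ ω, (1 - cos (inner ℝ k (X ω))) := by
  have hint : Integrable (fun ω => Complex.exp (Complex.I * ((inner ℝ k (X ω) : ℝ) : ℂ))) :=
    Integrable.of_bound (by fun_prop) 1 (.of_forall fun ω => by
      rw [mul_comm, Complex.norm_exp_ofReal_mul_I])
  have hre : (charFn' X k).re = ∫ ω, cos (inner ℝ k (X ω)) := by
    rw [charFn', ← RCLike.re_to_complex, ← integral_re hint]
    simp only [RCLike.re_to_complex, mul_comm Complex.I, Complex.exp_ofReal_mul_I_re]
  rw [hre, integral_sub (integrable_const 1), integral_const, probReal_univ, smul_eq_mul, mul_one]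
  exact Integrable.of_bound (by fun_prop) 1 (.of_forall fun ω => by
    simpa using abs_cos_le_one _)

theorem ae_inner_eq_zero_of_tendsto_one_sub_charFn' {d : ℕ} {Ω : Type*} [MeasureSpace Ω]
    [IsProbabilityMeasure (ℙ : Measure Ω)] {X : Ω → EuclideanSpace ℝ (Fin d)} (hX : Measurable X)
    {α : ℝ} (hα : 2 < α) {L : ℝ → ℝ} (hLpos : ∀ t : ℝ, 0 < t → 0 < L t)
    (hL : SlowlyVaryingAtZero L)
    (hphi : Tendsto (fun k => (1 - charFn' X k) / ((L ‖k‖ * ‖k‖ ^ α : ℝ) : ℂ)) (𝓝[≠] 0) (𝓝 1))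
    {v : EuclideanSpace ℝ (Fin d)} (hv : ‖v‖ = 1) :
    ∀ᵐ ω ∂(ℙ : Measure Ω), inner ℝ v (X ω) = 0 := by
  obtain ⟨t, ht, hLt⟩ := hL.exists_tendsto_mul_rpow hLpos (sub_pos.2 hα)
  have htpos : ∀ᶠ n in atTop, 0 < t n := ht self_mem_nhdsWithin
  have hk : Tendsto (fun n => t n • v) atTop (𝓝[≠] 0) := by
    refine tendsto_nhdsWithin_iff.2 ⟨?_, htpos.mono fun n hn => smul_ne_zero hn.ne' ?_⟩
    · simpa using (tendsto_nhds_of_tendsto_nhdsWithin ht).smul_const v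
    · exact norm_ne_zero_iff.1 (hv ▸ one_ne_zero)
  have hre : Tendsto (fun n => (∫ ω, (1 - cos (t n * inner ℝ v (X ω)))) / (L (t n) * t n ^ α))
      atTop (𝓝 1) := by
    refine ((Complex.continuous_re.tendsto 1).comp (hphi.comp hk)).congr' ?_
    filter_upwards [htpos] with n hn
    simp only [Function.comp_apply, Complex.div_ofReal_re, Complex.sub_re, Complex.one_re,
      one_sub_re_charFn' hX, real_inner_smul_left, norm_smul, hv, norm_eq_abs, abs_of_pos hn,
      mul_one]
  refine ae_eq_zero_of_tendsto_integral_one_sub_cos_div_sq (by fun_prop)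
    (tendsto_nhdsWithin_mono_right (by simp) ht) ?_
  refine (mul_one (0 : ℝ) ▸ hLt.mul hre).congr' ?_
  filter_upwards [htpos] with n hn
  have hsplit : t n ^ α = t n ^ (α - 2) * t n ^ 2 := by
    rw [← rpow_natCast, ← rpow_add hn]
    norm_num
  have := hLpos _ hn
  have := rpow_pos_of_pos hn (α - 2)
  rw [hsplit]
  field_simp

theorem statement18
    {Ω : Type*} [MeasureSpace Ω] [IsProbabilityMeasure (ℙ : Measure Ω)]
    (d : ℕ) (X : Ω → EuclideanSpace ℝ (Fin d)) (hmeas : Measurable X)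
    (α : ℝ) (hα : 2 < α)
    (L : ℝ → ℝ) (hLpos : ∀ t : ℝ, 0 < t → 0 < L t)
    (hL : SlowlyVaryingAtZero L)
    (hphi : Tendsto
      (fun k : EuclideanSpace ℝ (Fin d) =>
        (1 - charFn' X k) / ((L ‖k‖ * ‖k‖ ^ α : ℝ) : ℂ))
      (𝓝[≠] (0 : EuclideanSpace ℝ (Fin d))) (𝓝 1)) :
    ∀ᵐ ω ∂(ℙ : Measure Ω), X ω = 0 := by
  have hcoord (i : Fin d) : ∀ᵐ ω ∂(ℙ : Measure Ω), X ω i = 0 := by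
    simpa [EuclideanSpace.inner_single_left] using
      ae_inner_eq_zero_of_tendsto_one_sub_charFn' hmeas hα hLpos hL hphi
        (v := EuclideanSpace.single i 1) (by simp)
  filter_upwards [ae_all_iff.2 hcoord] with ω hω
  ext i
  exact hω i
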